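/- arXiv:1809.08454 — 4 statements merged into one kernel-verified Lean document; each statement's English description precedes it below -/
import Mathlib

section
/- Let A_n satisfy Assumption (A) with parameter p = p_n ∈ (0,1) such that np ≤ log(1/p). Then there exists an absolute constant C̄ < ∞ such that P(Ω₀) ≥ 1 − C̄/log n. In particular this holds for a matrix with i.i.d. Ber(p) entries and for the adjacency matrices of the undirected Erdős–Rényi graph, the directed Erdős–Rényi graph, and the random bipartite graph. -/
open MeasureTheory ProbabilityTheory Filter Matrix

noncomputable section

/-- Euclidean norm of a vector in `ℝ^n`. -/
def vnorm {n : ℕ} (x : Fin n → ℝ) : ℝ := Real.sqrt (∑ i, x i ^ 2)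

/-- The event that a matrix has a zero row or a zero column. -/
def hasZeroRowOrCol {n : ℕ} (A : Matrix (Fin n) (Fin n) ℝ) : Prop :=
  (∃ i, ∀ j, A i j = 0) ∨ (∃ j, ∀ i, A i j = 0)

/-- The smallest singular value `s_min(A) = inf_{‖x‖₂ = 1} ‖Ax‖₂`. -/
def sMin {n : ℕ} (A : Matrix (Fin n) (Fin n) ℝ) : ℝ :=
  sInf {r | ∃ x : Fin n → ℝ, vnorm x = 1 ∧ r = vnorm (A.mulVec x)}

/-- The `ℓ₂ → ℓ₂` operator norm of a matrix. -/
def opNorm {m n : ℕ} (A : Matrix (Fin m) (Fin n) ℝ) : ℝ :=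
  sSup {r | ∃ x : Fin n → ℝ, vnorm x = 1 ∧ r = vnorm (A.mulVec x)}

/-- `X` is a Bernoulli(p) random variable: it takes the value `1` with probability `p`
and the value `0` with probability `1 - p`. -/
def IsBer {Ωs : Type*} [MeasurableSpace Ωs] (P : Measure Ωs) (p : ℝ) (X : Ωs → ℝ) : Prop :=
  Measurable X ∧ P {ω | X ω = 1} = ENNReal.ofReal p ∧ P {ω | X ω = 0} = ENNReal.ofReal (1 - p)

/-- The family `X` consists of i.i.d. Bernoulli(p) random variables. -/
def IIDBer {Ωs : Type*} [MeasurableSpace Ωs] {ι : Type*} (P : Measure Ωs) (p : ℝ)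
    (X : ι → Ωs → ℝ) : Prop :=
  iIndepFun X P ∧ ∀ i, IsBer P p (X i)

/-- Assumption (A): `{0,1}`-valued entries; diagonal and off-diagonal parts independent;
diagonal entries jointly independent, `a_{ii} ~ Ber(p_i)` with `p_i ≤ p`; each off-diagonal
entry is `Ber(p)` and independent of all other entries except possibly its mirror entry. -/
structure AssumptionA {Ωs : Type*} [MeasurableSpace Ωs] (P : Measure Ωs) {n : ℕ}
    (p : ℝ) (A : Ωs → Matrix (Fin n) (Fin n) ℝ) : Prop where
  zero_one : ∀ ω i j, A ω i j = 0 ∨ A ω i j = 1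
  diag_offdiag_indep :
    IndepFun (fun ω => fun i : Fin n => A ω i i)
      (fun ω => fun q : {q : Fin n × Fin n // q.1 ≠ q.2} => A ω q.1.1 q.1.2) P
  diag_indep : iIndepFun (fun i : Fin n => fun ω => A ω i i) P
  diag_ber : ∀ i, ∃ pi : ℝ, pi ≤ p ∧ IsBer P pi (fun ω => A ω i i)
  offdiag_ber : ∀ i j, i ≠ j → IsBer P p (fun ω => A ω i j)
  offdiag_indep : ∀ i j : Fin n, i ≠ j →
    IndepFun (fun ω => A ω i j)
      (fun ω => fun q : {q : Fin n × Fin n // q ≠ (i, j) ∧ q ≠ (j, i)} => A ω q.1.1 q.1.2) P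

/-!
Only zero rows are used. Let `R i` be the event that row `i` vanishes. By the
second-moment (Chung–Erdős) inequality, `P (⋃ R i) ≥ (∑ P (R i))² / ∑ P (R i ∩ R j)`.
Independence gives `P (R i) ≥ (1 - p)ⁿ` and, for `i ≠ i'`, `P (R i ∩ R i') ≤ (1 - p)^(2n - 3)`:
apart from the mirror pair `(i, i')`, `(i', i)`, the off-diagonal entries of the two rows are
independent. With `M = n (1 - p)ⁿ` this yields `P (⋃ R i) ≥ 1 - 1 / M - 3p`, and below the
threshold `np ≤ log (1 / p)` one has `M ≥ log n / (2e)` and `p ≤ 2 / log n`.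
-/

namespace Real

variable {x p : ℝ}

theorem le_exp_neg_of_mul_le_log_inv (hp : 0 < p) (hxp : x * p ≤ log (1 / p)) :
    p ≤ exp (-(x * p)) := by
  rw [one_div, log_inv] at hxp
  calc p = exp (log p) := (exp_log hp).symm
    _ ≤ exp (-(x * p)) := exp_le_exp.2 (by linarith)

theorem mul_log_inv_le_one_sub (hp : 0 < p) : p * log (1 / p) ≤ 1 - p := by
  have h := log_le_sub_one_of_pos (one_div_pos.2 hp)
  have : p * (1 / p - 1) = 1 - p := by field_simp
  nlinarith

theorem log_div_two_le_mul_exp_neg (hx : 0 < x) (hp : 0 < p) (hxp : x * p ≤ log (1 / p)) :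
    log x / 2 ≤ x * exp (-(x * p)) := by
  rcases le_total (x * p) (log x / 2) with hsmall | hlarge
  · calc log x / 2 ≤ exp (log x / 2) := by linarith [add_one_le_exp (log x / 2)]
      _ = x * exp (-(log x / 2)) := by
        rw [← exp_log hx, ← exp_add, exp_log hx]; ring_nf
      _ ≤ x * exp (-(x * p)) := by gcongr
  · calc log x / 2 ≤ x * p := hlarge
      _ ≤ x * exp (-(x * p)) := by gcongr; exact le_exp_neg_of_mul_le_log_inv hp hxp

theorem exp_neg_mul_sub_one_le_one_sub_pow {n : ℕ} (hp : 0 < p) (hp1 : p < 1)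
    (hnp : n * p ≤ log (1 / p)) : exp (-(n * p) - 1) ≤ (1 - p) ^ n := by
  have hq : 0 < 1 - p := by linarith
  -- `log (1 - p) ≥ -p / (1 - p)`, and `n p² ≤ p log (1 / p) ≤ 1 - p` absorbs the correction
  have hlog : -p / (1 - p) ≤ log (1 - p) := by
    have := one_sub_inv_le_log_of_pos hq
    rwa [show 1 - (1 - p)⁻¹ = -p / (1 - p) by field_simp; ring] at this
  have hnp2 : n * p ^ 2 ≤ 1 - p := by
    nlinarith [mul_log_inv_le_one_sub hp]
  have hkey : -(n * p) - 1 ≤ n * log (1 - p) := by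
    have hcorr : -(n * p) - 1 ≤ n * (-p / (1 - p)) := by
      rw [mul_div_assoc', le_div_iff₀ hq]; nlinarith
    have : n * (-p / (1 - p)) ≤ n * log (1 - p) := by gcongr
    linarith
  calc exp (-(n * p) - 1) ≤ exp (n * log (1 - p)) := exp_le_exp.2 hkey
    _ = (1 - p) ^ n := by rw [exp_nat_mul, exp_log hq]

theorem log_le_two_mul_log_inv (hx : 0 < x) (hp : 0 < p) (hxp : x * p ≤ log (1 / p)) :
    log x ≤ 2 * log (1 / p) := by
  have hl : 0 < log (1 / p) := lt_of_lt_of_le (by positivity) hxp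
  calc log x ≤ log (log (1 / p) / p) := by
        gcongr; rwa [le_div_iff₀ hp]
    _ = log (log (1 / p)) + log (1 / p) := by
        rw [div_eq_mul_one_div, log_mul hl.ne' (by positivity)]
    _ ≤ 2 * log (1 / p) := by linarith [log_le_self hl.le]

theorem one_div_mul_one_sub_pow_add_le {n : ℕ} (hn : 2 ≤ n) (hp : 0 < p) (hp1 : p < 1)
    (hnp : n * p ≤ log (1 / p)) :
    1 / (n * (1 - p) ^ n) + (1 - (1 - p) ^ 3) ≤ 12 / log n := by
  have hn0 : (0 : ℝ) < n := by positivity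
  have hL : 0 < log n := log_pos (by exact_mod_cast hn)
  have hM : log n / (2 * exp 1) ≤ n * (1 - p) ^ n :=
    calc log n / (2 * exp 1) ≤ n * exp (-(n * p)) / exp 1 := by
          rw [← div_div]; gcongr; exact log_div_two_le_mul_exp_neg hn0 hp hnp
      _ = n * exp (-(n * p) - 1) := by rw [exp_sub, mul_div_assoc]
      _ ≤ n * (1 - p) ^ n := by gcongr; exact exp_neg_mul_sub_one_le_one_sub_pow hp hp1 hnp
  have hinvM : 1 / (n * (1 - p) ^ n) ≤ 2 * exp 1 / log n := by
    rw [div_le_div_iff₀ (mul_pos hn0 (pow_pos (sub_pos.2 hp1) n)) hL]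
    linarith [(div_le_iff₀ (by positivity)).1 hM]
  have hcube : 1 - (1 - p) ^ 3 ≤ 3 * p := by
    have := one_add_mul_le_pow (a := -p) (by linarith) 3
    push_cast at this; linarith
  have hpL : p * log n ≤ 2 := by
    have := log_le_two_mul_log_inv hn0 hp hnp
    nlinarith [mul_log_inv_le_one_sub hp]
  have h3p : 3 * p ≤ 6 / log n := by rw [le_div_iff₀ hL]; linarith
  have he : 2 * exp 1 / log n + 6 / log n ≤ 12 / log n := by
    rw [← add_div]; gcongr; linarith [exp_one_lt_d9]
  linarith

end Real

theorem one_sub_le_one_div_add_of_sq_le_mul {μ S u M K r : ℝ} (hM : 0 < M) (hr : 0 < r)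
    (hr1 : r ≤ 1) (hK : K * r = M ^ 2) (hMμ : M ≤ μ) (hS : S ≤ μ + K) (hu : 0 ≤ u)
    (hμ : μ ^ 2 ≤ u * S) :
    1 - u ≤ 1 / M + (1 - r) := by
  have hμu : r * μ ^ 2 ≤ u * (r * μ + M ^ 2) := by
    have : u * S ≤ u * (μ + K) := by gcongr
    nlinarith
  -- `μ ↦ r μ² / (r μ + M²)` is increasing, so `u ≥ r M / (r + M)`
  have hmono : M * r * (r * μ + M ^ 2) ≤ r * μ ^ 2 * (r + M) := by
    nlinarith [mul_nonneg (mul_nonneg hr.le (sub_nonneg.2 hMμ)) (hM.le.trans hMμ),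
      mul_nonneg hM.le (mul_nonneg (sub_nonneg.2 hMμ) (by linarith : 0 ≤ M + μ))]
  have hMu : M * r ≤ u * (r + M) := by
    have hpos : 0 < r * μ + M ^ 2 := by nlinarith
    nlinarith
  rcases le_total u 1 with hu1 | hu1
  · have hru : r - 1 / M ≤ u := by
      rw [sub_le_iff_le_add, ← sub_le_iff_le_add', le_div_iff₀ hM]; nlinarith
    linarith
  · have : 0 ≤ 1 / M + (1 - r) := by positivity
    linarith

theorem Finset.sum_sum_le_sum_diag_add_card_sq_mul {ι : Type*} [Fintype ι] [DecidableEq ι]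
    {a : ι → ι → ℝ} {c : ℝ} (hc : 0 ≤ c) (h : ∀ i j, i ≠ j → a i j ≤ c) :
    ∑ i, ∑ j, a i j ≤ ∑ i, a i i + Fintype.card ι ^ 2 * c := by
  have hrow : ∀ i, ∑ j, a i j ≤ a i i + Fintype.card ι * c := by
    intro i
    rw [← Finset.add_sum_erase _ _ (Finset.mem_univ i)]
    gcongr
    calc ∑ j ∈ Finset.univ.erase i, a i j ≤ (Finset.univ.erase i).card • c :=
          Finset.sum_le_card_nsmul _ _ _ fun j hj => h i j (Finset.ne_of_mem_erase hj).symm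
      _ ≤ Fintype.card ι * c := by
          rw [nsmul_eq_mul]; gcongr; exact_mod_cast Finset.card_le_univ _
  calc ∑ i, ∑ j, a i j ≤ ∑ i, (a i i + Fintype.card ι * c) :=
        Finset.sum_le_sum fun i _ => hrow i
    _ = ∑ i, a i i + Fintype.card ι ^ 2 * c := by
      rw [Finset.sum_add_distrib, Finset.sum_const, Finset.card_univ, nsmul_eq_mul]; ring

theorem Set.indicator_iUnion_sub_mul_sum_sq {Ω ι : Type*} [Fintype ι] (R : ι → Set Ω)
    (t : ℝ) (ω : Ω) :
    ((⋃ i, R i).indicator 1 ω - t * ∑ i, (R i).indicator (1 : Ω → ℝ) ω) ^ 2 =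
      (⋃ i, R i).indicator 1 ω - 2 * t * ∑ i, (R i).indicator 1 ω
        + t ^ 2 * ∑ i, ∑ j, (R i ∩ R j).indicator 1 ω := by
  by_cases hω : ω ∈ ⋃ i, R i
  · simp only [Set.indicator_of_mem hω, Set.inter_indicator_one, Pi.mul_apply,
      ← Finset.sum_mul_sum, Pi.one_apply]
    ring
  · have hR : ∀ i, ω ∉ R i := fun i h => hω (Set.mem_iUnion.2 ⟨i, h⟩)
    simp [Set.indicator_of_notMem, hR]

theorem sq_sum_measureReal_le_measureReal_iUnion_mul {Ω ι : Type*} [MeasurableSpace Ω]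
    [Fintype ι] (μ : Measure Ω) [IsFiniteMeasure μ] {R : ι → Set Ω}
    (hR : ∀ i, MeasurableSet (R i)) :
    (∑ i, μ.real (R i)) ^ 2 ≤ μ.real (⋃ i, R i) * ∑ i, ∑ j, μ.real (R i ∩ R j) := by
  have hU : MeasurableSet (⋃ i, R i) := MeasurableSet.iUnion hR
  have hRR : ∀ i j, MeasurableSet (R i ∩ R j) := fun i j => (hR i).inter (hR j)
  have hint : ∀ {s : Set Ω}, MeasurableSet s → Integrable (s.indicator (1 : Ω → ℝ)) μ :=
    fun hs => (integrable_const 1).indicator hs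
  have hf : Integrable (fun ω => ∑ i, (R i).indicator (1 : Ω → ℝ) ω) μ :=
    integrable_finsetSum _ fun i _ => hint (hR i)
  have hf2 : Integrable (fun ω => ∑ i, ∑ j, (R i ∩ R j).indicator (1 : Ω → ℝ) ω) μ :=
    integrable_finsetSum _ fun i _ => integrable_finsetSum _ fun j _ => hint (hRR i j)
  -- `0 ≤ ∫ (1_U - t f)²` with `f = ∑ 1_{R i}` is a quadratic in `t`, so its discriminant is `≤ 0`
  have hquad : ∀ t : ℝ, 0 ≤ (∑ i, ∑ j, μ.real (R i ∩ R j)) * (t * t)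
      + (-2 * ∑ i, μ.real (R i)) * t + μ.real (⋃ i, R i) := by
    intro t
    have h := integral_nonneg (μ := μ) (f := fun ω =>
      ((⋃ i, R i).indicator 1 ω - t * ∑ i, (R i).indicator (1 : Ω → ℝ) ω) ^ 2)
      fun ω => sq_nonneg _
    simp only [Set.indicator_iUnion_sub_mul_sum_sq] at h
    rw [integral_add
        (f := fun ω => (⋃ i, R i).indicator 1 ω - 2 * t * ∑ i, (R i).indicator 1 ω)
        ((hint hU).sub (hf.const_mul _)) (hf2.const_mul _),
      integral_sub (hint hU) (hf.const_mul _), integral_const_mul, integral_const_mul,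
      integral_finsetSum _ fun i _ => hint (hR i), integral_indicator_one hU] at h
    simp only [integral_finsetSum _ fun i _ => integrable_finsetSum _ fun j _ => hint (hRR i j),
      integral_finsetSum _ fun j _ => hint (hRR _ j), integral_indicator_one (hRR _ _),
      integral_indicator_one (hR _)] at h
    linarith
  have := discrim_le_zero hquad
  rw [discrim] at this
  linarith

theorem measure_iInter_preimage_eq_prod_of_indepFun {Ω ι β : Type*} [MeasurableSpace Ω]
    [MeasurableSpace β] [DecidableEq ι] {P : Measure Ω} [IsProbabilityMeasure P]
    {X : ι → Ω → β} {B : ι → Set β} (hB : ∀ i, MeasurableSet (B i)) (s : Finset ι)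
    (hX : ∀ a ∈ s, IndepFun (X a) (fun ω (b : s.erase a) => X b ω) P) :
    P (⋂ a ∈ s, X a ⁻¹' B a) = ∏ a ∈ s, P (X a ⁻¹' B a) := by
  induction s using Finset.induction_on with
  | empty => simp
  | @insert a s ha ih =>
    have hrest : ∀ b ∈ s, IndepFun (X b) (fun ω (c : s.erase b) => X c ω) P := by
      intro b hb
      have hφ : Measurable fun (g : (insert a s).erase b → β) (c : s.erase b) =>
          g ⟨c, Finset.mem_erase.2 ⟨(Finset.mem_erase.1 c.2).1,
            Finset.mem_insert_of_mem (Finset.mem_erase.1 c.2).2⟩⟩ :=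
        measurable_pi_lambda _ fun c => measurable_pi_apply _
      exact (hX b (Finset.mem_insert_of_mem hb)).comp measurable_id hφ
    have hs : (⋂ b ∈ s, X b ⁻¹' B b) =
        (fun ω (c : (insert a s).erase a) => X c ω) ⁻¹' Set.univ.pi fun c => B c := by
      ext ω
      simp [Finset.erase_insert ha]
    rw [Finset.set_biInter_insert, Finset.prod_insert ha, ← ih hrest, hs,
      (hX a (Finset.mem_insert_self a s)).measure_inter_preimage_eq_mul _ _ (hB a)
        (MeasurableSet.univ_pi fun c => hB c)]

namespace AssumptionA

variable {Ω : Type*} [MeasurableSpace Ω] {P : Measure Ω} {n : ℕ} {p : ℝ}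
  {A : Ω → Matrix (Fin n) (Fin n) ℝ}

theorem measurable_entry (hA : AssumptionA P p A) (i j : Fin n) :
    Measurable fun ω => A ω i j := by
  obtain rfl | hij := eq_or_ne i j
  · obtain ⟨_, _, hmeas, -⟩ := hA.diag_ber i
    exact hmeas
  · exact (hA.offdiag_ber i j hij).1

theorem measurableSet_row_eq_zero (hA : AssumptionA P p A) (i : Fin n) :
    MeasurableSet {ω | ∀ j, A ω i j = 0} := by
  simp only [Set.ofPred_forall]
  exact MeasurableSet.iInter fun j =>
    measurableSet_eq_fun (hA.measurable_entry i j) measurable_const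

variable [IsProbabilityMeasure P]

theorem measure_forall_eq_zero (hA : AssumptionA P p A) {s : Finset (Fin n × Fin n)}
    (hs : ∀ q ∈ s, q.swap ∉ s) :
    P {ω | ∀ q ∈ s, A ω q.1 q.2 = 0} = ENNReal.ofReal (1 - p) ^ s.card := by
  classical
  have hoff : ∀ q ∈ s, q.1 ≠ q.2 := fun q hq h =>
    hs q hq (by rwa [show q.swap = q from Prod.ext h.symm h])
  have hindep : ∀ q ∈ s,
      IndepFun (fun ω => A ω q.1 q.2) (fun ω (r : s.erase q) => A ω r.1.1 r.1.2) P := by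
    intro q hq
    have hφ : Measurable
        fun (g : {r : Fin n × Fin n // r ≠ (q.1, q.2) ∧ r ≠ (q.2, q.1)} → ℝ)
        (r : s.erase q) => g ⟨r, (Finset.mem_erase.1 r.2).1,
          fun h => hs q hq (h ▸ (Finset.mem_erase.1 r.2).2 :)⟩ :=
      measurable_pi_lambda _ fun r => measurable_pi_apply _
    exact (hA.offdiag_indep q.1 q.2 (hoff q hq)).comp measurable_id hφ
  calc P {ω | ∀ q ∈ s, A ω q.1 q.2 = 0}
      = P (⋂ q ∈ s, (fun ω => A ω q.1 q.2) ⁻¹' {0}) := by congr 1; ext; simp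
    _ = ∏ q ∈ s, P ((fun ω => A ω q.1 q.2) ⁻¹' {0}) :=
      measure_iInter_preimage_eq_prod_of_indepFun (fun _ => measurableSet_singleton 0) s hindep
    _ = ENNReal.ofReal (1 - p) ^ s.card :=
      Finset.prod_eq_pow_card fun q hq => (hA.offdiag_ber q.1 q.2 (hoff q hq)).2.2

theorem one_sub_pow_le_measureReal_row_eq_zero (hA : AssumptionA P p A) (hp : p ≤ 1)
    (i : Fin n) : (1 - p) ^ n ≤ P.real {ω | ∀ j, A ω i j = 0} := by
  classical
  rw [measureReal_def, ← ENNReal.ofReal_le_iff_le_toReal (measure_ne_top _ _),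
    ENNReal.ofReal_pow (sub_nonneg.2 hp)]
  have hsplit : {ω | ∀ j, A ω i j = 0} =
      (fun ω k => A ω k k) ⁻¹' {g | g i = 0} ∩
        {ω | ∀ q ∈ {i} ×ˢ Finset.univ.erase i, A ω q.1 q.2 = 0} := by
    ext ω
    simp only [Set.mem_ofPred_eq, Set.mem_inter_iff, Set.mem_preimage, Finset.mem_product,
      Finset.mem_singleton, Finset.mem_erase, Finset.mem_univ, and_true, Prod.forall]
    constructor
    · intro h
      exact ⟨h i, fun a b ⟨ha, _⟩ => ha ▸ h b⟩
    · rintro ⟨hii, hoff⟩ j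
      obtain rfl | hj := eq_or_ne i j
      exacts [hii, hoff i j ⟨rfl, Ne.symm hj⟩]
  have hoffDiag : {ω | ∀ q ∈ {i} ×ˢ Finset.univ.erase i, A ω q.1 q.2 = 0} =
      (fun ω (q : {q : Fin n × Fin n // q.1 ≠ q.2}) => A ω q.1.1 q.1.2) ⁻¹'
        Set.pi {q | q.1.1 = i} fun _ => {0} := by
    ext ω
    simp only [Set.mem_ofPred_eq, Set.mem_preimage, Set.mem_pi, Set.mem_singleton_iff,
      Subtype.forall, Prod.forall, Finset.mem_product, Finset.mem_singleton, Finset.mem_erase,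
      Finset.mem_univ, and_true]
    constructor
    · rintro h a b hab rfl
      exact h a b ⟨rfl, Ne.symm hab⟩
    · rintro h a b ⟨rfl, hb⟩
      exact h a b (Ne.symm hb) rfl
  have hrow := hA.measure_forall_eq_zero (s := {i} ×ˢ Finset.univ.erase i)
    fun q hq hq' => (Finset.mem_erase.1 (Finset.mem_product.1 hq).2).1
      (Finset.mem_singleton.1 (Finset.mem_product.1 hq').1)
  rw [Finset.card_product, Finset.card_singleton, one_mul,
    Finset.card_erase_of_mem (Finset.mem_univ i), Finset.card_univ, Fintype.card_fin] at hrow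
  obtain ⟨pi, hpi, -, -, hdiag⟩ := hA.diag_ber i
  rw [hsplit, hoffDiag, hA.diag_offdiag_indep.measure_inter_preimage_eq_mul _ _
    (measurableSet_eq_fun (measurable_pi_apply i) measurable_const)
    (MeasurableSet.pi (Set.to_countable _) fun _ _ => measurableSet_singleton 0), ← hoffDiag,
    hrow]
  calc ENNReal.ofReal (1 - p) ^ n
        = ENNReal.ofReal (1 - p) * ENNReal.ofReal (1 - p) ^ (n - 1) := by
        rw [← pow_succ', Nat.sub_add_cancel i.pos]
    _ ≤ ENNReal.ofReal (1 - pi) * ENNReal.ofReal (1 - p) ^ (n - 1) := by gcongr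
    _ = _ := by rw [← hdiag]; rfl

theorem measureReal_row_eq_zero_inter_le (hA : AssumptionA P p A) (hp : p ≤ 1) {i i' : Fin n}
    (hii' : i ≠ i') :
    P.real ({ω | ∀ j, A ω i j = 0} ∩ {ω | ∀ j, A ω i' j = 0}) ≤
      (1 - p) ^ (2 * n - 3) := by
  classical
  refine ENNReal.toReal_le_of_le_ofReal (pow_nonneg (sub_nonneg.2 hp) _) ?_
  rw [ENNReal.ofReal_pow (sub_nonneg.2 hp)]
  -- `(i', i)` is left out: it may be correlated with `(i, i')`
  set s : Finset (Fin n × Fin n) :=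
    {i} ×ˢ Finset.univ.erase i ∪ {i'} ×ˢ (Finset.univ.erase i').erase i
  have hswap : ∀ q ∈ s, q.swap ∉ s := by
    simp only [s, Finset.mem_union, Finset.mem_product, Finset.mem_singleton, Finset.mem_erase,
      Finset.mem_univ, and_true, Prod.fst_swap, Prod.snd_swap]
    grind
  have hcard : s.card = 2 * n - 3 := by
    rw [Finset.card_union_of_disjoint, Finset.card_product, Finset.card_product,
      Finset.card_erase_of_mem (Finset.mem_erase.2 ⟨hii', Finset.mem_univ _⟩),
      Finset.card_erase_of_mem (Finset.mem_univ _), Finset.card_erase_of_mem (Finset.mem_univ _)]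
    · simp only [Finset.card_singleton, Finset.card_univ, Fintype.card_fin]
      omega
    · exact Finset.disjoint_left.2 fun q h h' => hii' <|
        (Finset.mem_singleton.1 (Finset.mem_product.1 h).1).symm.trans
          (Finset.mem_singleton.1 (Finset.mem_product.1 h').1)
  calc P ({ω | ∀ j, A ω i j = 0} ∩ {ω | ∀ j, A ω i' j = 0})
      ≤ P {ω | ∀ q ∈ s, A ω q.1 q.2 = 0} := by
        refine measure_mono fun ω ⟨hi, hi'⟩ q hq => ?_
        simp only [s, Finset.mem_union, Finset.mem_product, Finset.mem_singleton] at hq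
        obtain ⟨h, -⟩ | ⟨h, -⟩ := hq <;> rw [h]
        exacts [hi q.2, hi' q.2]
    _ = ENNReal.ofReal (1 - p) ^ (2 * n - 3) := by rw [hA.measure_forall_eq_zero hswap, hcard]

end AssumptionA

/-- below the threshold `np ≤ log(1/p)`, a zero row or column exists
with probability at least `1 - C̄ / log n`. -/
theorem zero_row_or_col_whp :
    ∃ Cb : ℝ, 0 < Cb ∧
      ∀ (n : ℕ), 2 ≤ n →
      ∀ (p : ℝ) (Ωs : Type) [MeasurableSpace Ωs] (P : Measure Ωs),
        IsProbabilityMeasure P →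
        ∀ A : Ωs → Matrix (Fin n) (Fin n) ℝ,
          0 < p → p < 1 → (n : ℝ) * p ≤ Real.log (1 / p) →
          AssumptionA P p A →
          ENNReal.ofReal (1 - Cb / Real.log n) ≤ P {ω | hasZeroRowOrCol (A ω)} := by
  refine ⟨12, by norm_num, ?_⟩
  intro n hn p Ωs _ P _ A hp0 hp1 hnp hA
  set R : Fin n → Set Ωs := fun i => {ω | ∀ j, A ω i j = 0}
  have hq : 0 < 1 - p := sub_pos.2 hp1
  have hμ : (n : ℝ) * (1 - p) ^ n ≤ ∑ i, P.real (R i) := by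
    simpa using Finset.sum_le_sum (s := Finset.univ) fun i _ =>
      hA.one_sub_pow_le_measureReal_row_eq_zero hp1.le i
  have hS : ∑ i, ∑ j, P.real (R i ∩ R j) ≤
      ∑ i, P.real (R i) + n ^ 2 * (1 - p) ^ (2 * n - 3) := by
    simpa using Finset.sum_sum_le_sum_diag_add_card_sq_mul (by positivity)
      fun i j h => hA.measureReal_row_eq_zero_inter_le hp1.le h
  have hK : (n : ℝ) ^ 2 * (1 - p) ^ (2 * n - 3) * (1 - p) ^ 3 = (n * (1 - p) ^ n) ^ 2 := by
    rw [mul_assoc, ← pow_add, show 2 * n - 3 + 3 = 2 * n by omega]; ring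
  have hU := one_sub_le_one_div_add_of_sq_le_mul (by positivity) (pow_pos hq 3)
    (pow_le_one₀ hq.le (by linarith)) hK hμ hS measureReal_nonneg
    (sq_sum_measureReal_le_measureReal_iUnion_mul P hA.measurableSet_row_eq_zero)
  have hbound := Real.one_div_mul_one_sub_pow_add_le hn hp0 hp1 hnp
  calc ENNReal.ofReal (1 - 12 / Real.log n) ≤ ENNReal.ofReal (P.real (⋃ i, R i)) :=
        ENNReal.ofReal_le_ofReal (by linarith)
    _ = P (⋃ i, R i) := ofReal_measureReal
    _ ≤ P {ω | hasZeroRowOrCol (A ω)} :=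
        measure_mono (Set.iUnion_subset fun i ω h => Or.inl ⟨i, h⟩)
end
end

section
/- Let A be a deterministic n×n matrix with entries in {0,1}, let p ∈ (0,1) and δ₀ ∈ (0,1/10), and suppose: A has no zero row and no zero column; every row and every column of A has support of size at most C₁ np; the supports of light columns are pairwise disjoint; and for every j ∈ [n], at most r₀ light columns have support intersecting supp(col_j(A)). Then there exists a constant C, depending only on C₁ and r₀, such that every x ∈ S^{n-1} with ‖Ax‖₂ < 1/4 satisfies ‖x_{[n]\L(A)}‖₂ ≥ 1/(C np), where x_{[n]\L(A)} denotes the vector obtained from x by setting to zero all coordinates indexed by L(A). -/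
open MeasureTheory ProbabilityTheory Filter Matrix

noncomputable section

/-- Support of the `j`-th column of a matrix. -/
def colSupp {m n : ℕ} (A : Matrix (Fin m) (Fin n) ℝ) (j : Fin n) : Set (Fin m) :=
  {i | A i j ≠ 0}

/-- Support of the `i`-th row of a matrix. -/
def rowSupp {m n : ℕ} (A : Matrix (Fin m) (Fin n) ℝ) (i : Fin m) : Set (Fin n) :=
  {j | A i j ≠ 0}

/-- The set of light columns: columns whose support has at most `δ₀ n p` elements. -/
def lightSet {n : ℕ} (A : Matrix (Fin n) (Fin n) ℝ) (δ₀ p : ℝ) : Set (Fin n) :=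
  {j | ((colSupp A j).ncard : ℝ) ≤ δ₀ * ((n : ℝ) * p)}

/-- The folded matrix `fold(B) = B⁽¹⁾ − B⁽²⁾`, where `B⁽¹⁾, B⁽²⁾` consist of the first and
the next `⌊n/2⌋` rows of `B`. -/
def fold {n : ℕ} (B : Matrix (Fin n) (Fin n) ℝ) : Matrix (Fin (n / 2)) (Fin n) ℝ :=
  Matrix.of fun i j =>
    B ⟨i.1, by have h := i.2; omega⟩ j - B ⟨i.1 + n / 2, by have h := i.2; omega⟩ j

/-- The structural event `Ω_st` of Lemma 2.1: (1) no heavy rows or columns; (2) light columns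
have disjoint supports; (3) the number of light columns connected to any column is at most
`r₀`; (4) the support of a normal column has small intersection with those of the light ones
(for the folded matrix); (5) the extension property; (6) supports of columns of the matrix
and of its folded version are close in size. -/
def StructEvent {n : ℕ} (A : Matrix (Fin n) (Fin n) ℝ) (p δ₀ C₁ : ℝ) (r₀ : ℕ)
    (c₂ : ℝ) : Prop :=
  (∀ i : Fin n, ((rowSupp A i).ncard : ℝ) ≤ C₁ * ((n : ℝ) * p)) ∧
  (∀ j : Fin n, ((colSupp A j).ncard : ℝ) ≤ C₁ * ((n : ℝ) * p)) ∧
  (∀ i j : Fin n, i ≠ j → i ∈ lightSet A δ₀ p → j ∈ lightSet A δ₀ p →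
    colSupp A i ∩ colSupp A j = ∅) ∧
  (∀ j : Fin n,
    ({i | i ∈ lightSet A δ₀ p ∧ (colSupp A i ∩ colSupp A j).Nonempty}.ncard : ℕ) ≤ r₀) ∧
  (∀ j : Fin n, j ∉ lightSet A δ₀ p →
    (((colSupp (fold A) j ∩ ⋃ i ∈ lightSet A δ₀ p, colSupp (fold A) i).ncard : ℝ)
      ≤ δ₀ / 16 * ((n : ℝ) * p))) ∧
  (∀ I : Finset (Fin n), 2 ≤ I.card → (I.card : ℝ) ≤ c₂ / p →
    (∑ j ∈ I, ((colSupp (fold A) j).ncard : ℝ)) - δ₀ / 16 * ((n : ℝ) * p) * I.card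
      ≤ ((⋃ j ∈ I, colSupp (fold A) j).ncard : ℝ)) ∧
  (∀ j : Fin n,
    |((colSupp A j).ncard : ℝ) - ((colSupp (fold A) j).ncard : ℝ)| ≤ δ₀ / 8 * ((n : ℝ) * p))

/-!
Split a unit vector `x` as `x_L + x_N` along the light and normal coordinates. Since the light
columns are nonzero `{0,1}`-columns with disjoint supports, they are orthogonal of squared length
at least `1`, so `‖x_L‖ ≤ ‖A x_L‖`. Since row and column sums are at most `K = C₁ n p`, Schur's
test gives `‖A x_N‖ ≤ K ‖x_N‖`. Hence `‖x_L‖ ≤ ‖A x‖ + ‖A x_N‖ < 1/4 + K ‖x_N‖`, and together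
with `‖x_L‖² + ‖x_N‖² = 1` this forces `K ‖x_N‖ ≥ 1/2`.
-/

section Vnorm

variable {n : ℕ}

lemma vnorm_eq_norm_toLp (x : Fin n → ℝ) : vnorm x = ‖WithLp.toLp 2 x‖ := by
  simp [EuclideanSpace.norm_eq, vnorm]

lemma vnorm_nonneg (x : Fin n → ℝ) : 0 ≤ vnorm x := Real.sqrt_nonneg _

lemma sq_vnorm (x : Fin n → ℝ) : vnorm x ^ 2 = ∑ i, x i ^ 2 :=
  Real.sq_sqrt (Finset.sum_nonneg fun _ _ => sq_nonneg _)

lemma vnorm_sub_le (u v : Fin n → ℝ) : vnorm (u - v) ≤ vnorm u + vnorm v := by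
  simp only [vnorm_eq_norm_toLp, WithLp.toLp_sub]
  exact norm_sub_le _ _

lemma sq_vnorm_indicator_add_sq_vnorm_indicator_compl (s : Set (Fin n)) (x : Fin n → ℝ) :
    vnorm (s.indicator x) ^ 2 + vnorm (sᶜ.indicator x) ^ 2 = vnorm x ^ 2 := by
  simp only [sq_vnorm, ← Finset.sum_add_distrib]
  refine Finset.sum_congr rfl fun i _ => ?_
  by_cases hi : i ∈ s <;> simp [hi]

end Vnorm

section MatrixBounds

variable {m n : Type*} [Fintype m] [Fintype n]

theorem sum_sq_mulVec_le_of_sum_abs_le (A : Matrix m n ℝ) (x : n → ℝ) {R C : ℝ}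
    (hR : 0 ≤ R) (hrow : ∀ i, ∑ j, |A i j| ≤ R) (hcol : ∀ j, ∑ i, |A i j| ≤ C) :
    ∑ i, (A *ᵥ x) i ^ 2 ≤ R * C * ∑ j, x j ^ 2 := by
  have hrow_sq : ∀ i, (A *ᵥ x) i ^ 2 ≤ R * ∑ j, |A i j| * x j ^ 2 := fun i =>
    calc (A *ᵥ x) i ^ 2 ≤ (∑ j, |A i j|) * ∑ j, |A i j| * x j ^ 2 :=
          Finset.sum_sq_le_sum_mul_sum_of_sq_le_mul _ (fun j _ => abs_nonneg _)
            (fun j _ => mul_nonneg (abs_nonneg _) (sq_nonneg _))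
            (fun j _ => le_of_eq (by rw [mul_pow, ← sq_abs (A i j)]; ring))
      _ ≤ R * ∑ j, |A i j| * x j ^ 2 :=
          mul_le_mul_of_nonneg_right (hrow i)
            (Finset.sum_nonneg fun j _ => mul_nonneg (abs_nonneg _) (sq_nonneg _))
  calc ∑ i, (A *ᵥ x) i ^ 2 ≤ ∑ i, R * ∑ j, |A i j| * x j ^ 2 :=
        Finset.sum_le_sum fun i _ => hrow_sq i
    _ = R * ∑ j, (∑ i, |A i j|) * x j ^ 2 := by
        rw [← Finset.mul_sum, Finset.sum_comm]
        simp only [Finset.sum_mul]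
    _ ≤ R * ∑ j, C * x j ^ 2 := by gcongr with j; exact hcol j
    _ = R * C * ∑ j, x j ^ 2 := by rw [← Finset.mul_sum, mul_assoc]

theorem sum_sq_mulVec_indicator_eq (A : Matrix m n ℝ) (s : Set n) (x : n → ℝ)
    (horth : s.Pairwise fun j k => ∑ i, A i j * A i k = 0) :
    ∑ i, (A *ᵥ s.indicator x) i ^ 2 = ∑ j, s.indicator x j ^ 2 * ∑ i, A i j ^ 2 := by
  set y := s.indicator x
  have hcross : ∀ j k, j ≠ k → y j * y k * ∑ i, A i j * A i k = 0 := by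
    intro j k hjk
    by_cases hj : j ∈ s
    · by_cases hk : k ∈ s
      · rw [horth hj hk hjk, mul_zero]
      · simp [y, hk]
    · simp [y, hj]
  calc ∑ i, (A *ᵥ y) i ^ 2 = ∑ j, ∑ k, y j * y k * ∑ i, A i j * A i k := by
        simp only [mulVec, dotProduct, sq, Finset.sum_mul_sum]
        simp only [Finset.mul_sum]
        rw [Finset.sum_comm]
        refine Finset.sum_congr rfl fun j _ => ?_
        rw [Finset.sum_comm]
        exact Finset.sum_congr rfl fun k _ => Finset.sum_congr rfl fun i _ => by ring
    _ = ∑ j, y j * y j * ∑ i, A i j * A i j :=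
        Finset.sum_congr rfl fun j _ =>
          Finset.sum_eq_single j (fun k _ hkj => hcross j k hkj.symm) (by simp)
    _ = ∑ j, y j ^ 2 * ∑ i, A i j ^ 2 := by simp only [sq]

end MatrixBounds

lemma sum_eq_ncard_support_of_zero_or_one {ι : Type*} [Fintype ι] {f : ι → ℝ}
    (hf : ∀ i, f i = 0 ∨ f i = 1) : ∑ i, f i = (Function.support f).ncard := by
  classical
  calc ∑ i, f i = ∑ i, if f i ≠ 0 then (1 : ℝ) else 0 :=
        Finset.sum_congr rfl fun i _ => by rcases hf i with h | h <;> simp [h]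
    _ = (Function.support f).ncard := by
        rw [Finset.sum_boole, ← Set.ncard_coe_finset]
        simp [Function.support]

section ZeroOneMatrix

variable {m n : ℕ} {A : Matrix (Fin m) (Fin n) ℝ}

lemma sum_col_eq_ncard_colSupp (h01 : ∀ i j, A i j = 0 ∨ A i j = 1) (j : Fin n) :
    ∑ i, A i j = (colSupp A j).ncard :=
  sum_eq_ncard_support_of_zero_or_one fun i => h01 i j

lemma sum_abs_col_eq_ncard_colSupp (h01 : ∀ i j, A i j = 0 ∨ A i j = 1) (j : Fin n) :
    ∑ i, |A i j| = (colSupp A j).ncard := by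
  rw [← sum_col_eq_ncard_colSupp h01]
  exact Finset.sum_congr rfl fun i _ => by rcases h01 i j with h | h <;> simp [h]

lemma sum_sq_col_eq_ncard_colSupp (h01 : ∀ i j, A i j = 0 ∨ A i j = 1) (j : Fin n) :
    ∑ i, A i j ^ 2 = (colSupp A j).ncard := by
  rw [← sum_col_eq_ncard_colSupp h01]
  exact Finset.sum_congr rfl fun i _ => by rcases h01 i j with h | h <;> simp [h]

lemma sum_row_eq_ncard_rowSupp (h01 : ∀ i j, A i j = 0 ∨ A i j = 1) (i : Fin m) :
    ∑ j, A i j = (rowSupp A i).ncard :=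
  sum_eq_ncard_support_of_zero_or_one (h01 i)

lemma sum_abs_row_eq_ncard_rowSupp (h01 : ∀ i j, A i j = 0 ∨ A i j = 1) (i : Fin m) :
    ∑ j, |A i j| = (rowSupp A i).ncard := by
  rw [← sum_row_eq_ncard_rowSupp h01]
  exact Finset.sum_congr rfl fun j _ => by rcases h01 i j with h | h <;> simp [h]

lemma one_le_ncard_colSupp {j : Fin n} (h : ∃ i, A i j ≠ 0) : 1 ≤ (colSupp A j).ncard :=
  (Set.ncard_pos (Set.toFinite _)).mpr h

lemma sum_mul_col_eq_zero_of_colSupp_inter_eq_empty {j k : Fin n}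
    (h : colSupp A j ∩ colSupp A k = ∅) : ∑ i, A i j * A i k = 0 :=
  Finset.sum_eq_zero fun i _ => by
    by_contra hne
    exact Set.eq_empty_iff_forall_notMem.mp h i
      ⟨left_ne_zero_of_mul hne, right_ne_zero_of_mul hne⟩

end ZeroOneMatrix

lemma vnorm_mulVec_le {m n : ℕ} (A : Matrix (Fin m) (Fin n) ℝ) (x : Fin n → ℝ) {K : ℝ}
    (hK : 0 ≤ K) (hrow : ∀ i, ∑ j, |A i j| ≤ K) (hcol : ∀ j, ∑ i, |A i j| ≤ K) :
    vnorm (A *ᵥ x) ≤ K * vnorm x := by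
  rw [← pow_le_pow_iff_left₀ (vnorm_nonneg _) (mul_nonneg hK (vnorm_nonneg _)) two_ne_zero,
    mul_pow, sq_vnorm, sq_vnorm, sq]
  exact sum_sq_mulVec_le_of_sum_abs_le A x hK hrow hcol

lemma vnorm_indicator_le_vnorm_mulVec {m n : ℕ} (A : Matrix (Fin m) (Fin n) ℝ) (s : Set (Fin n))
    (x : Fin n → ℝ) (horth : s.Pairwise fun j k => ∑ i, A i j * A i k = 0)
    (hcol : ∀ j, 1 ≤ ∑ i, A i j ^ 2) :
    vnorm (s.indicator x) ≤ vnorm (A *ᵥ s.indicator x) := by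
  rw [← pow_le_pow_iff_left₀ (vnorm_nonneg _) (vnorm_nonneg _) two_ne_zero, sq_vnorm, sq_vnorm,
    sum_sq_mulVec_indicator_eq A s x horth]
  exact Finset.sum_le_sum fun j _ => le_mul_of_one_le_right (sq_nonneg _) (hcol j)

lemma one_half_le_mul_of_sq_add_sq_eq_one {a b K : ℝ} (ha : 0 ≤ a) (hb : 0 ≤ b) (hK : 1 ≤ K)
    (hab : a ^ 2 + b ^ 2 = 1) (hbK : b ≤ 1 / 4 + K * a) : 1 / 2 ≤ K * a := by
  by_contra! h
  nlinarith

/-- if a `{0,1}`-matrix has no zero row or column, no heavy rows or columns,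
light columns with pairwise disjoint supports, and at most `r₀` light columns meeting any
given column, then any unit vector `x` with `‖Ax‖₂ < 1/4` puts at least `1/(Cnp)` of its
Euclidean mass on coordinates outside the light columns. -/
theorem normal_coordinates_lower_bound :
    ∀ (C₁ : ℝ) (r₀ : ℕ), ∃ C : ℝ, 0 < C ∧
      ∀ (n : ℕ) (p δ₀ : ℝ) (A : Matrix (Fin n) (Fin n) ℝ),
        0 < p → p < 1 → 0 < δ₀ → δ₀ < 1 / 10 →
        (∀ i j, A i j = 0 ∨ A i j = 1) →
        ¬ hasZeroRowOrCol A →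
        (∀ i : Fin n, ((rowSupp A i).ncard : ℝ) ≤ C₁ * ((n : ℝ) * p)) →
        (∀ j : Fin n, ((colSupp A j).ncard : ℝ) ≤ C₁ * ((n : ℝ) * p)) →
        (∀ i j : Fin n, i ≠ j → i ∈ lightSet A δ₀ p → j ∈ lightSet A δ₀ p →
          colSupp A i ∩ colSupp A j = ∅) →
        (∀ j : Fin n,
          {i | i ∈ lightSet A δ₀ p ∧ (colSupp A i ∩ colSupp A j).Nonempty}.ncard ≤ r₀) →
        ∀ x : Fin n → ℝ, vnorm x = 1 → vnorm (A.mulVec x) < 1 / 4 →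
          1 / (C * ((n : ℝ) * p)) ≤ vnorm ((lightSet A δ₀ p)ᶜ.indicator x) := by
  intro C₁ _
  refine ⟨2 * max C₁ 1, by positivity, ?_⟩
  intro n p δ₀ A hp _ _ _ h01 hzero hrow hcol hdisj _ x hx hAx
  set L := lightSet A δ₀ p
  set K := C₁ * ((n : ℝ) * p)
  have hnonzero : ∀ j, ∃ i, A i j ≠ 0 := by
    simpa [hasZeroRowOrCol] using (not_or.mp hzero).2
  obtain ⟨j₀⟩ : Nonempty (Fin n) := by
    rcases n with _ | n
    · simp [vnorm] at hx
    · exact ⟨0⟩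
  have hK : 1 ≤ K := le_trans (by exact_mod_cast one_le_ncard_colSupp (hnonzero j₀)) (hcol j₀)
  have hlight : vnorm (L.indicator x) ≤ vnorm (A *ᵥ L.indicator x) :=
    vnorm_indicator_le_vnorm_mulVec A L x
      (fun j hj k hk hjk => sum_mul_col_eq_zero_of_colSupp_inter_eq_empty (hdisj j k hjk hj hk))
      (fun j => by
        rw [sum_sq_col_eq_ncard_colSupp h01]; exact_mod_cast one_le_ncard_colSupp (hnonzero j))
  have hnormal : vnorm (A *ᵥ Lᶜ.indicator x) ≤ K * vnorm (Lᶜ.indicator x) :=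
    vnorm_mulVec_le A _ (by linarith)
      (fun i => (sum_abs_row_eq_ncard_rowSupp h01 i).trans_le (hrow i))
      (fun j => (sum_abs_col_eq_ncard_colSupp h01 j).trans_le (hcol j))
  have hmass : vnorm (L.indicator x) ≤ 1 / 4 + K * vnorm (Lᶜ.indicator x) :=
    calc vnorm (L.indicator x) ≤ vnorm (A *ᵥ L.indicator x) := hlight
      _ = vnorm (A *ᵥ x - A *ᵥ Lᶜ.indicator x) := by
          rw [← mulVec_sub, Set.indicator_compl, sub_sub_cancel]
      _ ≤ vnorm (A *ᵥ x) + vnorm (A *ᵥ Lᶜ.indicator x) := vnorm_sub_le _ _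
      _ ≤ 1 / 4 + K * vnorm (Lᶜ.indicator x) := add_le_add hAx.le hnormal
  have hhalf : 1 / 2 ≤ K * vnorm (Lᶜ.indicator x) :=
    one_half_le_mul_of_sq_add_sq_eq_one (vnorm_nonneg _) (vnorm_nonneg _) hK
      (by rw [add_comm, sq_vnorm_indicator_add_sq_vnorm_indicator_compl, hx, one_pow]) hmass
  have hKC : 2 * K ≤ 2 * max C₁ 1 * ((n : ℝ) * p) := by
    have : (0 : ℝ) ≤ n * p := by positivity
    nlinarith [le_max_left C₁ 1]
  rw [div_le_iff₀ (by linarith)]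
  nlinarith [vnorm_nonneg (Lᶜ.indicator x)]
end
end

section
/- Let v ∈ R^n be a fixed vector and let 𝐱 ∈ R^n be a random vector with i.i.d. Ber(p) coordinates, p ∈ (0,1). Then there exists an absolute constant C such that for every ε > 0 and every J ⊆ [n]: L( ⟨𝐱, v⟩, p^{1/2}(1−p)^{1/2} ‖v_J‖₂ ε ) ≤ L( ⟨𝐱_J, v_J⟩, p^{1/2}(1−p)^{1/2} ‖v_J‖₂ ε ) ≤ C ( ε + ‖v_J‖_∞ / ( p^{1/2}(1−p)^{1/2} ‖v_J‖₂ ) ). -/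
/-!
Esseen's inequality: the Fejér kernel `fejer T` is the Fourier transform of the triangle
function `1 - |t| / T` on `[-T, T]` and is at least `4 T / π²` on `[-1/T, 1/T]`, so Markov's
inequality and Fubini bound the mass of any ball of radius `1 / T` by
`π² / (4 T) * ∫_{-T}^{T} |φ(t)| dt`, where `φ` is the characteristic function. For
`S = ∑_{i ∈ J} x_i v_i` the function `|φ|` is a product of factors `|p e^{iθ} + 1 - p|`,
each at most `exp(-2 p (1 - p) θ² / π²)` when `|θ| ≤ π`, so on `[-T, T]` with
`T = 1 / (N ε + ‖v_J‖_∞)` it is dominated by a Gaussian, whose integral gives the bound.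
The first inequality holds because adding an independent summand averages the shifted
concentration probabilities of `S`.
-/

open MeasureTheory ProbabilityTheory Filter Matrix

noncomputable section

/-- The Lévy concentration function of a real random variable:
`L(Z,ε) = sup_u P(|Z − u| ≤ ε)`. -/
def levy {Ωs : Type*} [MeasurableSpace Ωs] (P : Measure Ωs) (Z : Ωs → ℝ) (ε : ℝ) : ENNReal :=
  ⨆ u : ℝ, P {ω | |Z ω - u| ≤ ε}

open Real Set Metric

def fejer (T y : ℝ) : ℝ := if y = 0 then T else 2 * (1 - cos (T * y)) / (T * y ^ 2)

lemma integral_triangle_mul_cos {T : ℝ} (hT : 0 < T) (y : ℝ) :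
    ∫ t in -T..T, (1 - |t| / T) * cos (t * y) = fejer T y := by
  have hcont : Continuous fun t : ℝ => (1 - |t| / T) * cos (t * y) := by fun_prop
  have hsymm : ∫ t in -T..0, (1 - |t| / T) * cos (t * y)
      = ∫ t in (0 : ℝ)..T, (1 - |t| / T) * cos (t * y) := by
    simpa [abs_neg, cos_neg] using
      (intervalIntegral.integral_comp_neg (a := 0) (b := T)
        (fun t => (1 - |t| / T) * cos (t * y))).symm
  have hhalf : ∫ t in (0 : ℝ)..T, (1 - |t| / T) * cos (t * y)
      = ∫ t in (0 : ℝ)..T, (1 - t / T) * cos (t * y) :=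
    intervalIntegral.integral_congr fun t ht => by
      rw [uIcc_of_le hT.le] at ht
      simp only [abs_of_nonneg ht.1]
  rw [← intervalIntegral.integral_add_adjacent_intervals (hcont.intervalIntegrable _ 0)
    (hcont.intervalIntegrable 0 _), hsymm, hhalf, fejer]
  split_ifs with hy
  · subst hy
    simp only [mul_zero, cos_zero, mul_one]
    rw [intervalIntegral.integral_sub intervalIntegrable_const
      ((by fun_prop : Continuous fun t : ℝ => t / T).intervalIntegrable _ _)]
    simp only [intervalIntegral.integral_div, integral_id, intervalIntegral.integral_const,
      smul_eq_mul]
    field_simp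
    ring
  · have hderiv : ∀ t ∈ uIcc (0 : ℝ) T,
        HasDerivAt (fun s => (1 - s / T) * (sin (s * y) / y) - cos (s * y) / (T * y ^ 2))
          ((1 - t / T) * cos (t * y)) t := by
      intro t _
      have h1 : HasDerivAt (fun s : ℝ => 1 - s / T) (-(1 / T)) t := by
        simpa using ((hasDerivAt_id t).div_const T).const_sub 1
      have h2 : HasDerivAt (fun s => sin (s * y)) (cos (t * y) * y) t :=
        (hasDerivAt_mul_const y).sin
      have h3 : HasDerivAt (fun s => cos (s * y)) (-sin (t * y) * y) t :=
        (hasDerivAt_mul_const y).cos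
      refine ((h1.mul (h2.div_const y)).sub (h3.div_const (T * y ^ 2))).congr_deriv ?_
      field_simp
      ring
    rw [intervalIntegral.integral_eq_sub_of_hasDerivAt hderiv
      ((by fun_prop : Continuous fun t => (1 - t / T) * cos (t * y)).intervalIntegrable _ _)]
    simp only [zero_mul, sin_zero, cos_zero, div_self hT.ne']
    field_simp
    ring

lemma fejer_nonneg {T : ℝ} (hT : 0 ≤ T) (y : ℝ) : 0 ≤ fejer T y := by
  unfold fejer
  split_ifs
  · exact hT
  · have := cos_le_one (T * y)
    positivity

lemma fejer_le {T : ℝ} (hT : 0 < T) (y : ℝ) : fejer T y ≤ T := by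
  unfold fejer
  split_ifs with hy
  · rfl
  · rw [div_le_iff₀ (by positivity)]
    nlinarith [one_sub_sq_div_two_le_cos (x := T * y)]

lemma le_fejer {T y : ℝ} (hT : 0 < T) (hy : |y| ≤ 1 / T) : 4 / π ^ 2 * T ≤ fejer T y := by
  have hTy : |T * y| ≤ π := by
    rw [abs_mul, abs_of_pos hT]
    calc T * |y| ≤ T * (1 / T) := by gcongr
      _ = 1 := by field_simp
      _ ≤ π := by linarith [pi_gt_three]
  unfold fejer
  split_ifs with hy0
  · have : 4 ≤ π ^ 2 := by nlinarith [pi_gt_three]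
    rw [div_mul_eq_mul_div, div_le_iff₀ (by positivity)]
    nlinarith
  · rw [le_div_iff₀ (by positivity)]
    calc 4 / π ^ 2 * T * (T * y ^ 2) = 2 * (2 / π ^ 2 * (T * y) ^ 2) := by ring
      _ ≤ 2 * (1 - cos (T * y)) := by linarith [cos_le_one_sub_mul_cos_sq hTy]

lemma measurable_fejer (T : ℝ) : Measurable (fejer T) :=
  Measurable.ite (measurableSet_singleton 0) measurable_const (by fun_prop)

lemma integral_cos_mul_sub_le_norm_charFun (μ : Measure ℝ) [IsFiniteMeasure μ] (t u : ℝ) :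
    ∫ x, cos (t * (x - u)) ∂μ ≤ ‖charFun μ t‖ := by
  have hint : Integrable (fun x : ℝ => Complex.exp (↑(t * (x - u)) * Complex.I)) μ :=
    Integrable.of_bound (by fun_prop) 1 (ae_of_all _ fun x => by
      rw [Complex.norm_exp_ofReal_mul_I])
  have hshift : ∫ x, Complex.exp (↑(t * (x - u)) * Complex.I) ∂μ
      = Complex.exp (↑(-(t * u)) * Complex.I) * charFun μ t := by
    rw [charFun_apply_real, ← integral_const_mul]
    congr 1 with x
    rw [← Complex.exp_add]
    push_cast
    ring_nf
  calc ∫ x, cos (t * (x - u)) ∂μ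
      = (∫ x, Complex.exp (↑(t * (x - u)) * Complex.I) ∂μ).re := by
        simp_rw [← Complex.exp_ofReal_mul_I_re]
        exact integral_re hint
    _ ≤ ‖charFun μ t‖ := by
        rw [hshift]
        refine (Complex.re_le_norm _).trans_eq ?_
        rw [norm_mul, Complex.norm_exp_ofReal_mul_I, one_mul]

lemma measureReal_closedBall_le_integral_norm_charFun (μ : Measure ℝ) [IsFiniteMeasure μ]
    {T : ℝ} (hT : 0 < T) (u : ℝ) :
    μ.real (closedBall u (1 / T)) ≤ π ^ 2 / (4 * T) * ∫ t in -T..T, ‖charFun μ t‖ := by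
  set w : ℝ → ℝ := fun t => 1 - |t| / T
  set ν : Measure ℝ := volume.restrict (Ioc (-T) T)
  have hF : Integrable (fun z : ℝ × ℝ => w z.2 * cos (z.2 * (z.1 - u))) (μ.prod ν) :=
    Integrable.mul_bdd (((by fun_prop : Continuous w).integrableOn_Ioc).comp_snd μ)
      (by fun_prop) (c := 1) (ae_of_all _ fun z => by simpa using abs_cos_le_one _)
  have hmarkov : 4 / π ^ 2 * T * μ.real (closedBall u (1 / T)) ≤ ∫ x, fejer T (x - u) ∂μ := by
    refine le_trans ?_ (mul_meas_ge_le_integral_of_nonneg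
      (ae_of_all _ fun x => fejer_nonneg hT.le _) ?_ (4 / π ^ 2 * T))
    · gcongr
      · finiteness
      · exact fun x hx => le_fejer hT (by rwa [mem_closedBall, Real.dist_eq] at hx)
    · refine Integrable.of_bound
        ((measurable_fejer T).comp (measurable_id.sub_const u)).aestronglyMeasurable T
        (ae_of_all _ fun x => ?_)
      rw [Real.norm_of_nonneg (fejer_nonneg hT.le _)]
      exact fejer_le hT _
  have hfubini : ∫ x, fejer T (x - u) ∂μ = ∫ t, ∫ x, w t * cos (t * (x - u)) ∂μ ∂ν := by
    simp_rw [← integral_triangle_mul_cos hT, intervalIntegral.integral_of_le (neg_le_self hT.le)]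
    exact integral_integral_swap hF
  have hcharFun : ∫ t, ∫ x, w t * cos (t * (x - u)) ∂μ ∂ν ≤ ∫ t in -T..T, ‖charFun μ t‖ := by
    rw [intervalIntegral.integral_of_le (neg_le_self hT.le)]
    refine setIntegral_mono_on hF.integral_prod_right
      (continuous_charFun.norm.integrableOn_Ioc) measurableSet_Ioc fun t ht => ?_
    have hw0 : 0 ≤ w t := by
      rw [sub_nonneg, div_le_one hT, abs_le]
      exact ⟨ht.1.le, ht.2⟩
    have hw1 : w t ≤ 1 := by
      have : 0 ≤ |t| / T := by positivity
      linarith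
    rw [integral_const_mul]
    calc w t * ∫ x, cos (t * (x - u)) ∂μ ≤ w t * ‖charFun μ t‖ :=
          mul_le_mul_of_nonneg_left (integral_cos_mul_sub_le_norm_charFun μ t u) hw0
      _ ≤ ‖charFun μ t‖ := mul_le_of_le_one_left (norm_nonneg _) hw1
  have hc : π ^ 2 / (4 * T) * (4 / π ^ 2 * T) = 1 := by
    field_simp
  calc μ.real (closedBall u (1 / T))
      = π ^ 2 / (4 * T) * (4 / π ^ 2 * T * μ.real (closedBall u (1 / T))) := by
        rw [← mul_assoc, hc, one_mul]
    _ ≤ π ^ 2 / (4 * T) * ∫ t in -T..T, ‖charFun μ t‖ := by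
        gcongr
        exact hmarkov.trans (hfubini ▸ hcharFun)

lemma measureReal_closedBall_le_of_norm_charFun_le (μ : Measure ℝ) [IsFiniteMeasure μ]
    {T σ : ℝ} (hT : 0 < T) (hσ : 0 < σ)
    (hdecay : ∀ t ∈ Icc (-T) T, ‖charFun μ t‖ ≤ exp (-(2 / π ^ 2 * σ ^ 2) * t ^ 2)) (u : ℝ) :
    μ.real (closedBall u (1 / T)) ≤ π ^ 2 / (T * σ) := by
  set b := 2 / π ^ 2 * σ ^ 2
  have hb : 0 < b := by positivity
  have hgauss : √(π / b) ≤ 4 / σ := by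
    rw [sqrt_le_iff, div_pow, div_le_div_iff₀ hb (by positivity)]
    refine ⟨by positivity, ?_⟩
    have hπ : π ^ 3 ≤ 32 := (pow_le_pow_left₀ pi_pos.le pi_lt_d2.le 3).trans (by norm_num)
    calc π * σ ^ 2 ≤ 32 / π ^ 2 * σ ^ 2 := by
          gcongr
          rw [le_div_iff₀ (by positivity)]
          linarith
      _ = 4 ^ 2 * b := by ring
  calc μ.real (closedBall u (1 / T)) ≤ π ^ 2 / (4 * T) * ∫ t in -T..T, ‖charFun μ t‖ :=
        measureReal_closedBall_le_integral_norm_charFun μ hT u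
    _ ≤ π ^ 2 / (4 * T) * ∫ t, exp (-b * t ^ 2) := by
        gcongr
        calc ∫ t in -T..T, ‖charFun μ t‖ ≤ ∫ t in -T..T, exp (-b * t ^ 2) :=
              intervalIntegral.integral_mono_on (neg_le_self hT.le)
                (continuous_charFun.norm.intervalIntegrable _ _)
                ((by fun_prop : Continuous fun t => exp (-b * t ^ 2)).intervalIntegrable _ _)
                hdecay
          _ ≤ ∫ t, exp (-b * t ^ 2) := by
              rw [intervalIntegral.integral_of_le (neg_le_self hT.le)]
              exact setIntegral_le_integral (integrable_exp_neg_mul_sq hb)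
                (ae_of_all _ fun t => (exp_pos _).le)
    _ ≤ π ^ 2 / (4 * T) * (4 / σ) := by
        rw [integral_gaussian]
        gcongr
    _ = π ^ 2 / (T * σ) := by field_simp

lemma conv_closedBall_le_iSup (μ ν : Measure ℝ) [SFinite μ] [IsProbabilityMeasure ν] (u r : ℝ) :
    (μ ∗ ν) (closedBall u r) ≤ ⨆ w, μ (closedBall w r) := by
  have hB : MeasurableSet ((fun z : ℝ × ℝ => z.1 + z.2) ⁻¹' closedBall u r) :=
    measurableSet_closedBall.preimage (by fun_prop)
  rw [Measure.conv, Measure.map_apply (by fun_prop) measurableSet_closedBall,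
    Measure.prod_apply_symm hB]
  calc ∫⁻ y, μ ((fun x => (x, y)) ⁻¹' ((fun z : ℝ × ℝ => z.1 + z.2) ⁻¹' closedBall u r)) ∂ν
      = ∫⁻ y, μ (closedBall (u - y) r) ∂ν := by
        congr with y
        congr 1 with x
        simp only [mem_preimage, mem_closedBall, Real.dist_eq]
        ring_nf
    _ ≤ ∫⁻ _, ⨆ w, μ (closedBall w r) ∂ν := lintegral_mono fun y => le_iSup_of_le (u - y) le_rfl
    _ = ⨆ w, μ (closedBall w r) := by simp

section Levy

variable {Ω : Type*} [MeasurableSpace Ω]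

lemma levy_eq_iSup_map_closedBall (P : Measure Ω) {Z : Ω → ℝ} (hZ : Measurable Z) (r : ℝ) :
    levy P Z r = ⨆ u, P.map Z (closedBall u r) := by
  unfold levy
  congr with u
  rw [Measure.map_apply hZ measurableSet_closedBall]
  rfl

variable {P : Measure Ω} [IsProbabilityMeasure P]

lemma levy_add_le_of_indepFun {A B : Ω → ℝ} (hA : Measurable A) (hB : Measurable B)
    (hAB : IndepFun A B P) (r : ℝ) : levy P (A + B) r ≤ levy P A r := by
  have : IsProbabilityMeasure (P.map B) := Measure.isProbabilityMeasure_map hB.aemeasurable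
  rw [levy_eq_iSup_map_closedBall P (hA.add hB), levy_eq_iSup_map_closedBall P hA,
    hAB.map_add_eq_map_conv_map₀ hA.aemeasurable hB.aemeasurable]
  exact iSup_le fun u => conv_closedBall_le_iSup _ _ u r

lemma levy_sum_le_levy_finset_sum {ι : Type*} [Fintype ι] {X : ι → Ω → ℝ}
    (hX : ∀ i, Measurable (X i)) (hindep : iIndepFun X P) (J : Finset ι) (r : ℝ) :
    levy P (fun ω => ∑ i, X i ω) r ≤ levy P (fun ω => ∑ i ∈ J, X i ω) r := by
  classical
  have hsum : ∀ S : Finset ι, Measurable fun z : S → ℝ => ∑ i, z i :=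
    fun S => Finset.measurable_sum _ fun i _ => measurable_pi_apply i
  have hJ : IndepFun (fun ω => ∑ i ∈ J, X i ω) (fun ω => ∑ i ∈ Jᶜ, X i ω) P := by
    convert (hindep.indepFun_finset J Jᶜ disjoint_compl_right hX).comp (hsum J) (hsum Jᶜ)
      using 1 <;> ext ω <;> exact (Finset.sum_coe_sort _ fun i => X i ω).symm
  have hsplit : (fun ω => ∑ i, X i ω)
      = (fun ω => ∑ i ∈ J, X i ω) + fun ω => ∑ i ∈ Jᶜ, X i ω := by
    ext ω
    exact (Finset.sum_add_sum_compl J _).symm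
  rw [hsplit]
  exact levy_add_le_of_indepFun (Finset.measurable_fun_sum _ fun i _ => hX i)
    (Finset.measurable_fun_sum _ fun i _ => hX i) hJ r

end Levy

lemma norm_bernoulli_char_le {p θ : ℝ} (hp0 : 0 ≤ p) (hp1 : p ≤ 1) (hθ : |θ| ≤ π) :
    ‖(p : ℂ) * Complex.exp (θ * Complex.I) + (1 - p : ℝ)‖
      ≤ exp (-(2 / π ^ 2 * (p * (1 - p))) * θ ^ 2) := by
  have hpq : 0 ≤ p * (1 - p) := mul_nonneg hp0 (sub_nonneg.2 hp1)
  have hsq : ‖(p : ℂ) * Complex.exp (θ * Complex.I) + (1 - p : ℝ)‖ ^ 2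
      = 1 - 2 * (p * (1 - p)) * (1 - cos θ) := by
    rw [Complex.sq_norm, Complex.normSq_apply]
    simp only [Complex.add_re, Complex.add_im, Complex.mul_re, Complex.mul_im,
      Complex.ofReal_re, Complex.ofReal_im, Complex.exp_ofReal_mul_I_re,
      Complex.exp_ofReal_mul_I_im]
    nlinarith [sin_sq_add_cos_sq θ]
  have hcos : 2 / π ^ 2 * θ ^ 2 ≤ 1 - cos θ := by linarith [cos_le_one_sub_mul_cos_sq hθ]
  refine (pow_le_pow_iff_left₀ (norm_nonneg _) (exp_pos _).le two_ne_zero).1 ?_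
  calc ‖(p : ℂ) * Complex.exp (θ * Complex.I) + (1 - p : ℝ)‖ ^ 2
      = 1 - 2 * (p * (1 - p)) * (1 - cos θ) := hsq
    _ ≤ exp (-(2 * (p * (1 - p)) * (1 - cos θ))) := by
        linarith [add_one_le_exp (-(2 * (p * (1 - p)) * (1 - cos θ)))]
    _ ≤ exp (-(2 / π ^ 2 * (p * (1 - p))) * θ ^ 2) ^ 2 := by
        rw [← exp_nat_mul, exp_le_exp]
        push_cast
        nlinarith [mul_le_mul_of_nonneg_left hcos hpq]

section Bernoulli

variable {Ω : Type*} [MeasurableSpace Ω] {P : Measure Ω} [IsProbabilityMeasure P] {p : ℝ}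

lemma IsBer.integral_comp (hp0 : 0 ≤ p) (hp1 : p ≤ 1) {X : Ω → ℝ} (hX : IsBer P p X)
    {E : Type*} [NormedAddCommGroup E] [NormedSpace ℝ E] [CompleteSpace E] (f : ℝ → E) :
    ∫ ω, f (X ω) ∂P = p • f 1 + (1 - p) • f 0 := by
  obtain ⟨hXm, h1, h0⟩ := hX
  have hA : MeasurableSet {ω | X ω = 1} := hXm (measurableSet_singleton 1)
  have hB : MeasurableSet {ω | X ω = 0} := hXm (measurableSet_singleton 0)
  have hdisj : Disjoint {ω | X ω = 1} {ω | X ω = 0} :=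
    Set.disjoint_left.2 fun ω h1 h0 => one_ne_zero ((h1 : X ω = 1).symm.trans h0)
  have hvalues : ∀ᵐ ω ∂P, ω ∈ {ω | X ω = 1} ∪ {ω | X ω = 0} := by
    refine mem_ae_iff.2 ((prob_compl_eq_zero_iff (hA.union hB)).2 ?_)
    rw [measure_union hdisj hB, h1, h0, ← ENNReal.ofReal_add hp0 (sub_nonneg.2 hp1)]
    simp
  have hf : (fun ω => f (X ω)) =ᵐ[P] fun ω =>
      {ω | X ω = 1}.indicator (fun _ => f 1) ω + {ω | X ω = 0}.indicator (fun _ => f 0) ω := by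
    filter_upwards [hvalues] with ω hω
    rcases hω with h | h <;> simp_all [Set.indicator]
  rw [integral_congr_ae hf, integral_add ((integrable_const _).indicator hA)
    ((integrable_const _).indicator hB), integral_indicator_const _ hA,
    integral_indicator_const _ hB, measureReal_def, measureReal_def, h1, h0,
    ENNReal.toReal_ofReal hp0, ENNReal.toReal_ofReal (sub_nonneg.2 hp1)]

lemma IsBer.charFun_map_mul (hp0 : 0 ≤ p) (hp1 : p ≤ 1) {X : Ω → ℝ} (hX : IsBer P p X)
    (a t : ℝ) :
    charFun (P.map fun ω => X ω * a) t
      = (p : ℂ) * Complex.exp (↑(t * a) * Complex.I) + (1 - p : ℝ) := by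
  rw [charFun_apply_real, integral_map (hX.1.mul_const a).aemeasurable (by fun_prop),
    hX.integral_comp hp0 hp1 (fun y => Complex.exp (↑t * ↑(y * a) * Complex.I))]
  simp [Complex.real_smul]

lemma IIDBer.norm_charFun_finset_sum_le {ι : Type*} (hp0 : 0 ≤ p) (hp1 : p ≤ 1)
    {X : ι → Ω → ℝ} (hX : IIDBer P p X) (J : Finset ι) (a : ι → ℝ) {t : ℝ}
    (ht : ∀ i ∈ J, |t * a i| ≤ π) :
    ‖charFun (P.map fun ω => ∑ i ∈ J, X i ω * a i) t‖
      ≤ exp (-(2 / π ^ 2 * (p * (1 - p)) * ∑ i ∈ J, a i ^ 2) * t ^ 2) := by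
  have hmeas : ∀ i, Measurable fun ω => X i ω * a i := fun i => (hX.2 i).1.mul_const (a i)
  have hindep : iIndepFun (fun i ω => X i ω * a i) P :=
    hX.1.comp (fun i y => y * a i) fun i => measurable_id.mul_const (a i)
  rw [(hindep.restrict J).charFun_map_fun_finsetSum_eq_prod
    (fun i _ => (hmeas i).aemeasurable), Finset.prod_apply, norm_prod, Finset.mul_sum,
    ← Finset.sum_neg_distrib, Finset.sum_mul, exp_sum]
  refine Finset.prod_le_prod (fun i _ => norm_nonneg _) fun i hi => ?_
  rw [(hX.2 i).charFun_map_mul hp0 hp1]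
  refine (norm_bernoulli_char_le hp0 hp1 (ht i hi)).trans_eq ?_
  ring_nf

lemma IIDBer.levy_finset_sum_le {ι : Type*} (hp0 : 0 ≤ p) (hp1 : p ≤ 1) {X : ι → Ω → ℝ}
    (hX : IIDBer P p X) (J : Finset ι) (a : ι → ℝ) {N M ε : ℝ} (hN : 0 < N)
    (hN2 : N ^ 2 = p * (1 - p) * ∑ i ∈ J, a i ^ 2) (hM0 : 0 ≤ M) (hM : ∀ i ∈ J, |a i| ≤ M)
    (hε : 0 < ε) :
    levy P (fun ω => ∑ i ∈ J, X i ω * a i) (N * ε) ≤ ENNReal.ofReal (π ^ 2 * (ε + M / N)) := by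
  set μ := P.map fun ω => ∑ i ∈ J, X i ω * a i
  have hmeas : Measurable fun ω => ∑ i ∈ J, X i ω * a i :=
    Finset.measurable_fun_sum J fun i _ => (hX.2 i).1.mul_const (a i)
  have : IsProbabilityMeasure μ := Measure.isProbabilityMeasure_map hmeas.aemeasurable
  -- The frequency cutoff `T` keeps `|t * a i| ≤ 1` on `[-T, T]` while `N * ε ≤ 1 / T`.
  set T := 1 / (N * ε + M) with hT_def
  have hNε : 0 < N * ε := mul_pos hN hε
  have hT : 0 < T := by positivity
  have hT_inv : 1 / T = N * ε + M := by rw [hT_def, one_div_one_div]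
  have hdecay : ∀ t ∈ Icc (-T) T, ‖charFun μ t‖ ≤ exp (-(2 / π ^ 2 * N ^ 2) * t ^ 2) := by
    intro t ht
    refine (hX.norm_charFun_finset_sum_le hp0 hp1 J a fun i hi => ?_).trans_eq
      (by rw [hN2]; ring_nf)
    calc |t * a i| = |t| * |a i| := abs_mul _ _
      _ ≤ T * (N * ε + M) := by gcongr; exacts [abs_le.2 ht, by linarith [hM i hi]]
      _ = 1 := by rw [← hT_inv, mul_one_div_cancel hT.ne']
      _ ≤ π := by linarith [pi_gt_three]
  rw [levy_eq_iSup_map_closedBall P hmeas]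
  refine iSup_le fun u => ?_
  calc μ (closedBall u (N * ε)) ≤ μ (closedBall u (1 / T)) :=
        measure_mono (closedBall_subset_closedBall (by linarith))
    _ = ENNReal.ofReal (μ.real (closedBall u (1 / T))) :=
        (ofReal_measureReal (measure_ne_top _ _)).symm
    _ ≤ ENNReal.ofReal (π ^ 2 / (T * N)) :=
        ENNReal.ofReal_le_ofReal (measureReal_closedBall_le_of_norm_charFun_le μ hT hN hdecay u)
    _ = ENNReal.ofReal (π ^ 2 * (ε + M / N)) := by
        congr 1
        rw [div_mul_eq_div_div_swap, ← mul_one_div, hT_inv]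
        field_simp

end Bernoulli

lemma vnorm_ite_mem {n : ℕ} (v : Fin n → ℝ) (J : Finset (Fin n)) :
    vnorm (fun i => if i ∈ J then v i else 0) = √(∑ i ∈ J, v i ^ 2) := by
  simp only [vnorm, ite_pow, ne_eq, OfNat.ofNat_ne_zero, not_false_eq_true, zero_pow,
    Finset.sum_ite_mem, Finset.univ_inter]

/-- Berry–Esséen bound on the Lévy concentration function of `⟨x, v⟩` for a
Bernoulli random vector `x` and a fixed vector `v`, restricted to a set `J` of coordinates. -/
theorem levy_concentration_bound :
    ∃ C : ℝ, 0 < C ∧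
      ∀ (n : ℕ) (p : ℝ) (Ωs : Type) [MeasurableSpace Ωs] (P : Measure Ωs),
        IsProbabilityMeasure P →
        ∀ x : Ωs → Fin n → ℝ,
          0 < p → p < 1 →
          IIDBer P p (fun i : Fin n => fun ω => x ω i) →
          ∀ (v : Fin n → ℝ) (J : Finset (Fin n)), (∃ i ∈ J, v i ≠ 0) →
            ∀ ε : ℝ, 0 < ε →
              levy P (fun ω => ∑ i, x ω i * v i)
                  (Real.sqrt p * Real.sqrt (1 - p) *
                    vnorm (fun i => if i ∈ J then v i else 0) * ε)
                ≤ levy P (fun ω => ∑ i ∈ J, x ω i * v i)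
                  (Real.sqrt p * Real.sqrt (1 - p) *
                    vnorm (fun i => if i ∈ J then v i else 0) * ε) ∧
              levy P (fun ω => ∑ i ∈ J, x ω i * v i)
                  (Real.sqrt p * Real.sqrt (1 - p) *
                    vnorm (fun i => if i ∈ J then v i else 0) * ε)
                ≤ ENNReal.ofReal (C * (ε +
                    (⨆ i : {i : Fin n // i ∈ J}, |v i.1|) /
                      (Real.sqrt p * Real.sqrt (1 - p) *
                        vnorm (fun i => if i ∈ J then v i else 0)))) := by
  refine ⟨π ^ 2, by positivity, ?_⟩
  intro n p Ωs _ P hP x hp0 hp1 hiid v J hJ ε hε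
  obtain ⟨i₀, hi₀J, hi₀⟩ := hJ
  refine ⟨levy_sum_le_levy_finset_sum (X := fun i ω => x ω i * v i)
    (fun i => (hiid.2 i).1.mul_const (v i))
    (hiid.1.comp (fun i y => y * v i) fun i => measurable_id.mul_const (v i)) J _, ?_⟩
  have hW : 0 < ∑ i ∈ J, v i ^ 2 :=
    Finset.sum_pos' (fun i _ => sq_nonneg _) ⟨i₀, hi₀J, by positivity⟩
  have hM : ∀ i ∈ J, |v i| ≤ ⨆ j : {j : Fin n // j ∈ J}, |v j.1| :=
    fun i hi => le_ciSup (f := fun j : {j : Fin n // j ∈ J} => |v j.1|)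
      (Set.finite_range _).bddAbove ⟨i, hi⟩
  rw [vnorm_ite_mem]
  refine hiid.levy_finset_sum_le hp0.le hp1.le J v
    (mul_pos (mul_pos (sqrt_pos.2 hp0) (sqrt_pos.2 (sub_pos.2 hp1))) (sqrt_pos.2 hW)) ?_
    ((abs_nonneg _).trans (hM i₀ hi₀J)) hM hε
  rw [mul_pow, mul_pow, sq_sqrt hp0.le, sq_sqrt (sub_pos.2 hp1).le, sq_sqrt hW.le]
end
end

section
/- Let Ã be an n×n real matrix, let Ã_{,1} be its first column, and let H₁ be the linear span of its remaining columns Ã_{,2}, …, Ã_{,n}. Let C be the (n−1)×(n−1) matrix that is the transpose of the submatrix of Ã obtained by removing its first row and first column, let xᵀ ∈ R^{n−1} be the first row of Ã with the entry a₁₁ removed, and let y ∈ R^{n−1} be the first column of Ã with the entry a₁₁ removed. Then: (i) if C is not invertible, dist(Ã_{,1}, H₁) ≥ sup_{v ∈ Ker(C), ‖v‖₂ = 1} |⟨y, v⟩|; (ii) if C is invertible, dist(Ã_{,1}, H₁) = |⟨C^{−1} x, y⟩ − a₁₁| / √(1 + ‖C^{−1} x‖₂²). -/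
/-!
A nonzero vector `w` orthogonal to a subspace `H` gives the lower bound
`dist(v, H) ≥ |⟨v, w⟩| / ‖w‖` by Cauchy–Schwarz, with equality when `H = w^⊥`.
With `C` the transposed minor, `w = (0, v)` is orthogonal to the columns `2, …, n` of `Ã`
exactly when `C v = 0`, which gives (i). For (ii), `w = (-1, C⁻¹ x)` is orthogonal to those
columns, and since the minor is invertible they span the whole hyperplane `w^⊥`: the last
`n - 1` coordinates of any `z ∈ w^⊥` are matched by a combination of the columns, and then
orthogonality to `w` forces the first coordinate to match as well.
-/

open MeasureTheory ProbabilityTheory Filter Matrix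

noncomputable section

/-- Euclidean distance of a vector to a set of vectors. -/
def distToSet {n : ℕ} (v : Fin n → ℝ) (S : Set (Fin n → ℝ)) : ℝ :=
  ⨅ h : S, vnorm (v - (h : Fin n → ℝ))

lemma vnorm_eq_norm {m : ℕ} (x : Fin m → ℝ) :
    vnorm x = ‖(WithLp.toLp 2 x : EuclideanSpace ℝ (Fin m))‖ := by
  simp [vnorm, EuclideanSpace.norm_eq]

lemma vnorm_sq {m : ℕ} (x : Fin m → ℝ) : vnorm x ^ 2 = x ⬝ᵥ x := by
  rw [vnorm, Real.sq_sqrt (by positivity)]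
  simp [dotProduct, sq]

lemma abs_dotProduct_le_vnorm_mul_vnorm {m : ℕ} (x y : Fin m → ℝ) :
    |x ⬝ᵥ y| ≤ vnorm x * vnorm y := by
  rw [vnorm_eq_norm, vnorm_eq_norm, dotProduct_comm]
  exact abs_real_inner_le_norm (WithLp.toLp 2 x) (WithLp.toLp 2 y)

lemma vnorm_smul {m : ℕ} (c : ℝ) (x : Fin m → ℝ) : vnorm (c • x) = |c| * vnorm x := by
  rw [vnorm_eq_norm, vnorm_eq_norm, WithLp.toLp_smul, norm_smul, Real.norm_eq_abs]

lemma vnorm_vecCons {m : ℕ} (a : ℝ) (u : Fin m → ℝ) :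
    vnorm (vecCons a u) = Real.sqrt (a ^ 2 + vnorm u ^ 2) := by
  rw [vnorm, Fin.sum_univ_succ, vnorm, Real.sq_sqrt (by positivity)]
  simp

lemma distToSet_nonneg {m : ℕ} (v : Fin m → ℝ) (S : Set (Fin m → ℝ)) : 0 ≤ distToSet v S :=
  Real.iInf_nonneg fun _ => Real.sqrt_nonneg _

lemma distToSet_le_vnorm_sub {m : ℕ} (v : Fin m → ℝ) {S : Set (Fin m → ℝ)} {h : Fin m → ℝ}
    (hh : h ∈ S) : distToSet v S ≤ vnorm (v - h) :=
  ciInf_le ⟨0, by rintro _ ⟨_, rfl⟩; exact Real.sqrt_nonneg _⟩ (⟨h, hh⟩ : S)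

lemma abs_dotProduct_div_vnorm_le_distToSet {m : ℕ} (v : Fin m → ℝ) {S : Set (Fin m → ℝ)}
    (hS : S.Nonempty) {w : Fin m → ℝ} (hw : ∀ h ∈ S, h ⬝ᵥ w = 0) :
    |v ⬝ᵥ w| / vnorm w ≤ distToSet v S := by
  have : Nonempty S := hS.to_subtype
  refine le_ciInf fun ⟨h, hh⟩ => div_le_of_le_mul₀ (Real.sqrt_nonneg _) (Real.sqrt_nonneg _) ?_
  calc |v ⬝ᵥ w| = |(v - h) ⬝ᵥ w| := by rw [sub_dotProduct, hw h hh, sub_zero]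
    _ ≤ vnorm (v - h) * vnorm w := abs_dotProduct_le_vnorm_mul_vnorm _ _

lemma distToSet_eq_abs_dotProduct_div_vnorm {m : ℕ} (v : Fin m → ℝ)
    (H : Submodule ℝ (Fin m → ℝ)) {w : Fin m → ℝ} (hw : ∀ h ∈ H, h ⬝ᵥ w = 0)
    (hH : ∀ z, z ⬝ᵥ w = 0 → z ∈ H) :
    distToSet v H = |v ⬝ᵥ w| / vnorm w := by
  refine le_antisymm ?_ (abs_dotProduct_div_vnorm_le_distToSet v ⟨0, H.zero_mem⟩ hw)
  obtain rfl | hw0 := eq_or_ne w 0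
  · simpa [vnorm] using distToSet_le_vnorm_sub v (hH v (dotProduct_zero v))
  have hww : w ⬝ᵥ w ≠ 0 := fun h => hw0 (dotProduct_self_eq_zero.mp h)
  have hnorm : vnorm w ≠ 0 := fun h => hww (by rw [← vnorm_sq, h, sq, zero_mul])
  set c := v ⬝ᵥ w / w ⬝ᵥ w
  have hfoot : v - c • w ∈ H := hH _ (by
    rw [sub_dotProduct, smul_dotProduct, smul_eq_mul, div_mul_cancel₀ _ hww, sub_self])
  calc distToSet v H ≤ vnorm (v - (v - c • w)) := distToSet_le_vnorm_sub v hfoot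
    _ = |v ⬝ᵥ w| / vnorm w := by
      rw [sub_sub_cancel, vnorm_smul, abs_div, ← vnorm_sq, abs_sq, div_mul_eq_mul_div, sq,
        mul_div_mul_right _ _ hnorm]

lemma dotProduct_eq_zero_of_mem_span {ι R : Type*} [Fintype ι] [CommSemiring R] {S : Set (ι → R)}
    {w : ι → R} (hS : ∀ s ∈ S, s ⬝ᵥ w = 0) {h : ι → R} (hh : h ∈ Submodule.span R S) :
    h ⬝ᵥ w = 0 := by
  induction hh using Submodule.span_induction with
  | mem s hs => exact hS s hs
  | zero => exact zero_dotProduct w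
  | add x y _ _ hx hy => rw [add_dotProduct, hx, hy, add_zero]
  | smul c x _ hx => rw [smul_dotProduct, hx, smul_zero]

section TailColumns

variable {R : Type*} [CommRing R] {n : ℕ} (A : Matrix (Fin (n + 1)) (Fin (n + 1)) R)

def tailColSpan : Submodule R (Fin (n + 1) → R) :=
  Submodule.span R {c : Fin (n + 1) → R | ∃ j : Fin (n + 1), j ≠ 0 ∧ c = fun i => A i j}

lemma mulVec_vecCons_zero_mem_tailColSpan (α : Fin n → R) :
    A *ᵥ vecCons 0 α ∈ tailColSpan A := by
  have : A *ᵥ vecCons 0 α = ∑ k, α k • fun i => A i k.succ := by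
    ext i
    simp [mulVec, dotProduct, Fin.sum_univ_succ, mul_comm]
  rw [this]
  exact Submodule.sum_mem _ fun k _ =>
    Submodule.smul_mem _ _ (Submodule.subset_span ⟨k.succ, k.succ_ne_zero, rfl⟩)

lemma dotProduct_vecCons_eq_zero_of_mem_tailColSpan {a : R} {u : Fin n → R}
    (hu : ∀ k, A 0 k.succ * a + ((A.submatrix Fin.succ Fin.succ)ᵀ *ᵥ u) k = 0)
    {h : Fin (n + 1) → R} (hh : h ∈ tailColSpan A) : h ⬝ᵥ vecCons a u = 0 := by
  refine dotProduct_eq_zero_of_mem_span ?_ hh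
  rintro _ ⟨j, hj, rfl⟩
  obtain ⟨k, rfl⟩ := Fin.exists_succ_eq_of_ne_zero hj
  rw [← hu k]
  simp [dotProduct, mulVec, Fin.sum_univ_succ]

lemma mem_tailColSpan_of_dotProduct_vecCons_eq_zero
    (hA : IsUnit ((A.submatrix Fin.succ Fin.succ)ᵀ).det) {u : Fin n → R}
    (hu : (A.submatrix Fin.succ Fin.succ)ᵀ *ᵥ u = fun j => A 0 j.succ) {z : Fin (n + 1) → R}
    (hz : z ⬝ᵥ vecCons (-1) u = 0) : z ∈ tailColSpan A := by
  set B := A.submatrix Fin.succ Fin.succ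
  rw [det_transpose] at hA
  set α := B⁻¹ *ᵥ Fin.tail z
  have hα : B *ᵥ α = Fin.tail z := by rw [mulVec_mulVec, mul_nonsing_inv _ hA, one_mulVec]
  have hz0 : z 0 = u ⬝ᵥ Fin.tail z := by
    simp only [dotProduct, Fin.sum_univ_succ, cons_val_zero, cons_val_succ, Fin.tail] at hz ⊢
    simp only [mul_comm (u _)]
    linear_combination -hz
  convert mulVec_vecCons_zero_mem_tailColSpan A α
  ext i
  cases i using Fin.cases with
  | zero =>
    calc z 0 = u ⬝ᵥ (B *ᵥ α) := by rw [hz0, hα]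
      _ = (Bᵀ *ᵥ u) ⬝ᵥ α := by rw [dotProduct_mulVec, mulVec_transpose]
      _ = (A *ᵥ vecCons 0 α) 0 := by rw [hu]; simp [mulVec, dotProduct, Fin.sum_univ_succ]
  | succ k =>
    calc z k.succ = (B *ᵥ α) k := (congrFun hα k).symm
      _ = (A *ᵥ vecCons 0 α) k.succ := by simp [B, mulVec, dotProduct, Fin.sum_univ_succ]

end TailColumns

section Distance

variable {n : ℕ} (A : Matrix (Fin (n + 1)) (Fin (n + 1)) ℝ)

lemma abs_dotProduct_le_distToSet_tailColSpan {v : Fin n → ℝ}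
    (hv : (A.submatrix Fin.succ Fin.succ)ᵀ *ᵥ v = 0) (hv1 : vnorm v = 1) :
    |(fun i => A i.succ 0) ⬝ᵥ v| ≤ distToSet (fun i => A i 0) (tailColSpan A) := by
  have horth (h) (hh : h ∈ tailColSpan A) : h ⬝ᵥ vecCons 0 v = 0 :=
    dotProduct_vecCons_eq_zero_of_mem_tailColSpan A (fun k => by rw [hv]; simp) hh
  have := abs_dotProduct_div_vnorm_le_distToSet (fun i => A i 0) ⟨0, zero_mem _⟩ horth
  rwa [dotProduct_cons, mul_zero, zero_add, vnorm_vecCons, hv1, zero_pow two_ne_zero, one_pow,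
    zero_add, Real.sqrt_one, div_one] at this

lemma distToSet_tailColSpan_eq (hA : IsUnit ((A.submatrix Fin.succ Fin.succ)ᵀ).det) :
    distToSet (fun i => A i 0) (tailColSpan A) =
      |((A.submatrix Fin.succ Fin.succ)ᵀ⁻¹ *ᵥ fun j => A 0 j.succ) ⬝ᵥ (fun i => A i.succ 0)
          - A 0 0| /
        Real.sqrt (1 + vnorm ((A.submatrix Fin.succ Fin.succ)ᵀ⁻¹ *ᵥ fun j => A 0 j.succ) ^ 2) := by
  set u := (A.submatrix Fin.succ Fin.succ)ᵀ⁻¹ *ᵥ fun j => A 0 j.succ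
  have hu : (A.submatrix Fin.succ Fin.succ)ᵀ *ᵥ u = fun j => A 0 j.succ := by
    rw [mulVec_mulVec, mul_nonsing_inv _ hA, one_mulVec]
  rw [distToSet_eq_abs_dotProduct_div_vnorm _ _ (w := vecCons (-1) u)
      (fun h => dotProduct_vecCons_eq_zero_of_mem_tailColSpan A (fun k => by rw [hu]; simp))
      (fun z => mem_tailColSpan_of_dotProduct_vecCons_eq_zero A hA hu),
    vnorm_vecCons, dotProduct_cons, dotProduct_comm u, neg_one_sq, mul_neg_one, neg_add_eq_sub]
  rfl

end Distance

/-- distance via quadratic forms (Proposition 4.2). Here `C` is the transpose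
of the minor of `Ã` obtained by removing the first row and column, `x` is the first row and
`y` is the first column of `Ã`, both with the entry `a₁₁` removed, and `H₁` is the span of
the columns of `Ã` other than the first. -/
theorem distance_via_quadratic_forms (n : ℕ) (A : Matrix (Fin (n + 1)) (Fin (n + 1)) ℝ) :
    (¬ IsUnit ((A.submatrix Fin.succ Fin.succ)ᵀ).det →
      (⨆ v : {v : Fin n → ℝ //
          ((A.submatrix Fin.succ Fin.succ)ᵀ).mulVec v = 0 ∧ vnorm v = 1},
        |∑ i, A (Fin.succ i) 0 * (v : Fin n → ℝ) i|)
      ≤ distToSet (fun i => A i 0)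
          ↑(Submodule.span ℝ
            {c : Fin (n + 1) → ℝ | ∃ j : Fin (n + 1), j ≠ 0 ∧ c = fun i => A i j})) ∧
    (IsUnit ((A.submatrix Fin.succ Fin.succ)ᵀ).det →
      distToSet (fun i => A i 0)
          ↑(Submodule.span ℝ
            {c : Fin (n + 1) → ℝ | ∃ j : Fin (n + 1), j ≠ 0 ∧ c = fun i => A i j})
        = |(∑ i, ((A.submatrix Fin.succ Fin.succ)ᵀ)⁻¹.mulVec
              (fun j => A 0 (Fin.succ j)) i * A (Fin.succ i) 0) - A 0 0| /
          Real.sqrt (1 + vnorm (((A.submatrix Fin.succ Fin.succ)ᵀ)⁻¹.mulVec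
              (fun j => A 0 (Fin.succ j))) ^ 2)) :=
  ⟨fun _ => Real.iSup_le (fun v => abs_dotProduct_le_distToSet_tailColSpan A v.2.1 v.2.2)
      (distToSet_nonneg _ _),
    distToSet_tailColSpan_eq A⟩
end
end
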